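/- arXiv:1506.06041 — 2 statements merged into one kernel-verified Lean document; each statement's English description precedes it below -/
import Mathlib

section
/- Let G be a Δ-regular finite simple graph of order n ≥ 1. Then A_{−Δ}(G) = n, and the minimum degree of the nonzero terms of the alliance polynomial A(G;x) equals n − Δ. -/
open Polynomial Finset

/-- Number of neighbors of `v` inside the set `S` (denoted δ_S(v)). -/
def SimpleGraph.degIn {V : Type*} [Fintype V] [DecidableEq V]
    (G : SimpleGraph V) [DecidableRel G.Adj] (S : Finset V) (v : V) : ℕ :=
  (S.filter (fun u => G.Adj v u)).card

/-- Number of neighbors of `v` outside the set `S` (denoted δ_{S̄}(v)). -/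
def SimpleGraph.degOut {V : Type*} [Fintype V] [DecidableEq V]
    (G : SimpleGraph V) [DecidableRel G.Adj] (S : Finset V) (v : V) : ℕ :=
  (Sᶜ.filter (fun u => G.Adj v u)).card

/-- `S` is an exact defensive `k`-alliance in `G`: the induced subgraph `⟨S⟩` is connected
(in particular `S` is nonempty) and `k = k_S = min_{v ∈ S} (δ_S(v) - δ_{S̄}(v))`. -/
def SimpleGraph.IsExactAlliance {V : Type*} [Fintype V] [DecidableEq V]
    (G : SimpleGraph V) [DecidableRel G.Adj] (S : Finset V) (k : ℤ) : Prop :=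
  (G.induce (S : Set V)).Connected ∧
    (∀ v ∈ S, k ≤ (G.degIn S v : ℤ) - (G.degOut S v : ℤ)) ∧
    (∃ v ∈ S, (G.degIn S v : ℤ) - (G.degOut S v : ℤ) = k)

/-- `A_k(G)`: the number of exact defensive `k`-alliances in `G`. -/
noncomputable def SimpleGraph.allianceCoeff {V : Type*} [Fintype V] [DecidableEq V]
    (G : SimpleGraph V) [DecidableRel G.Adj] (k : ℤ) : ℕ :=
  Set.ncard {S : Finset V | G.IsExactAlliance S k}

/-- The alliance polynomial `A(G;x) = Σ_{k=-Δ}^{Δ} A_k(G) x^{n+k}`, where `n` is the order and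
`Δ` the maximum degree of `G`, regarded as a real polynomial. -/
noncomputable def SimpleGraph.alliancePoly {V : Type*} [Fintype V] [DecidableEq V]
    (G : SimpleGraph V) [DecidableRel G.Adj] : Polynomial ℝ :=
  ∑ k ∈ Finset.Icc (-(G.maxDegree : ℤ)) (G.maxDegree : ℤ),
    (G.allianceCoeff k : ℝ) • X ^ (((Fintype.card V : ℤ) + k).toNat)

/-! A vertex `v` attains `δ_S(v) - δ_{S̄}(v) = -deg v` exactly when it has no neighbour in `S`,
and in a connected `⟨S⟩` that forces `S = {v}`. So, for a `Δ`-regular graph, `-Δ` is the least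
possible value of `k_S`, attained precisely by the `n` singletons. Since `Δ = maxDegree G`, the
coefficient `A_{-Δ}(G) = n` sits at the lowest exponent `n - Δ` of the alliance polynomial. -/

namespace SimpleGraph

variable {V : Type*} [Fintype V] [DecidableEq V] (G : SimpleGraph V) [DecidableRel G.Adj]

lemma degIn_add_degOut (S : Finset V) (v : V) : G.degIn S v + G.degOut S v = G.degree v := by
  rw [degIn, degOut, ← card_union_of_disjoint (disjoint_filter_filter disjoint_compl_right),
    ← filter_union, union_compl, ← card_neighborFinset_eq_degree]
  congr 1
  ext u
  simp

lemma neg_degree_le_degIn_sub_degOut (S : Finset V) (v : V) :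
    -(G.degree v : ℤ) ≤ G.degIn S v - G.degOut S v := by
  have := G.degIn_add_degOut S v
  omega

lemma degIn_sub_degOut_eq_neg_degree_iff (S : Finset V) (v : V) :
    (G.degIn S v : ℤ) - G.degOut S v = -(G.degree v) ↔ G.degIn S v = 0 := by
  have := G.degIn_add_degOut S v
  omega

lemma degIn_eq_zero_iff {S : Finset V} {v : V} : G.degIn S v = 0 ↔ ∀ u ∈ S, ¬G.Adj v u := by
  simp [degIn, filter_eq_empty_iff]

lemma eq_singleton_of_connected_induce_of_degIn_eq_zero {S : Finset V} {v : V}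
    (hS : (G.induce (S : Set V)).Connected) (hv : v ∈ S) (hin : G.degIn S v = 0) : S = {v} := by
  by_contra hne
  have : Nontrivial (S : Set V) :=
    Set.nontrivial_coe_sort.mpr (by simpa using (Finset.nontrivial_iff_ne_singleton hv).mpr hne)
  obtain ⟨⟨u, hu⟩, hadj⟩ := hS.preconnected.exists_adj_of_nontrivial ⟨v, hv⟩
  exact (G.degIn_eq_zero_iff.mp hin) u hu hadj

lemma isExactAlliance_singleton (v : V) : G.IsExactAlliance {v} (-(G.degree v)) := by
  have hin : G.degIn {v} v = 0 := G.degIn_eq_zero_iff.mpr (by simp)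
  refine ⟨?_, fun u hu => ?_, v, mem_singleton_self v, ?_⟩
  · rw [coe_singleton]
    exact Connected.of_subsingleton
  · rw [mem_singleton.mp hu]
    exact G.neg_degree_le_degIn_sub_degOut {v} v
  · exact (G.degIn_sub_degOut_eq_neg_degree_iff {v} v).mpr hin

variable {G}

lemma IsRegularOfDegree.isExactAlliance_neg_iff {Δ : ℕ} (hreg : G.IsRegularOfDegree Δ)
    (S : Finset V) : G.IsExactAlliance S (-(Δ : ℤ)) ↔ ∃ v, S = {v} := by
  constructor
  · rintro ⟨hS, -, v, hv, hk⟩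
    rw [← hreg v, G.degIn_sub_degOut_eq_neg_degree_iff] at hk
    exact ⟨v, G.eq_singleton_of_connected_induce_of_degIn_eq_zero hS hv hk⟩
  · rintro ⟨v, rfl⟩
    simpa [hreg v] using G.isExactAlliance_singleton v

lemma IsRegularOfDegree.allianceCoeff_neg {Δ : ℕ} (hreg : G.IsRegularOfDegree Δ) :
    G.allianceCoeff (-(Δ : ℤ)) = Fintype.card V := by
  have hset : {S : Finset V | G.IsExactAlliance S (-(Δ : ℤ))} = Set.range (fun v => {v}) := by
    ext S
    simp only [Set.mem_ofPred_eq, hreg.isExactAlliance_neg_iff, Set.mem_range, eq_comm]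
  rw [allianceCoeff, hset, Set.ncard_range_of_injective singleton_injective,
    Nat.card_eq_fintype_card]

variable (G)

lemma coeff_alliancePoly (m : ℕ) :
    G.alliancePoly.coeff m = ∑ k ∈ Icc (-(G.maxDegree : ℤ)) G.maxDegree,
      if ((Fintype.card V : ℤ) + k).toNat = m then (G.allianceCoeff k : ℝ) else 0 := by
  simp only [alliancePoly, finsetSum_coeff, coeff_smul, coeff_X_pow, smul_eq_mul, mul_ite,
    mul_one, mul_zero, eq_comm]

lemma coeff_alliancePoly_of_lt {m : ℕ} (hm : m < Fintype.card V - G.maxDegree) :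
    G.alliancePoly.coeff m = 0 := by
  rw [coeff_alliancePoly]
  refine sum_eq_zero fun k hk => if_neg ?_
  rw [mem_Icc] at hk
  omega

lemma coeff_alliancePoly_card_sub_maxDegree [Nonempty V] :
    G.alliancePoly.coeff (Fintype.card V - G.maxDegree) =
      G.allianceCoeff (-(G.maxDegree : ℤ)) := by
  have hlt := G.maxDegree_lt_card_verts
  rw [coeff_alliancePoly, sum_eq_single_of_mem (-(G.maxDegree : ℤ)) (by simp), if_pos (by omega)]
  intro k hk hne
  rw [mem_Icc] at hk
  exact if_neg (by omega)

end SimpleGraph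

/-- For a Δ-regular graph of order `n ≥ 1`, `A_{-Δ}(G) = n` and the minimum
degree of the nonzero terms of `A(G;x)` is `n - Δ`. -/
theorem allianceCoeff_neg_maxDeg_and_natTrailingDegree
    {V : Type*} [Fintype V] [DecidableEq V] [Nonempty V]
    (G : SimpleGraph V) [DecidableRel G.Adj] (Δ : ℕ)
    (hreg : G.IsRegularOfDegree Δ) :
    G.allianceCoeff (-(Δ : ℤ)) = Fintype.card V ∧
    G.alliancePoly.natTrailingDegree = Fintype.card V - Δ := by
  have hmax : G.maxDegree = Δ := hreg.maxDegree_eq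
  have hcoeff : G.alliancePoly.coeff (Fintype.card V - Δ) ≠ 0 := by
    rw [← hmax, G.coeff_alliancePoly_card_sub_maxDegree, hmax, hreg.allianceCoeff_neg]
    exact_mod_cast Fintype.card_ne_zero
  refine ⟨hreg.allianceCoeff_neg, le_antisymm (natTrailingDegree_le_of_ne_zero hcoeff) ?_⟩
  refine le_natTrailingDegree (by rintro h; simp [h] at hcoeff) fun m hm => ?_
  exact G.coeff_alliancePoly_of_lt (hmax ▸ hm)
end

section
/- Let G be a Δ-regular finite simple graph of order n with Δ ≥ 3 and 2Δ ≤ n ≤ 2Δ+1. If S₁ and S₂ are cliques of G of cardinality Δ, then either S₁ = S₂ or S₁ ∩ S₂ = ∅. In particular, G contains at most two distinct cliques of cardinality Δ. -/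
/-!
If two distinct `Δ`-cliques `S₁, S₂` share a vertex `v`, then `v` is adjacent to all of
`S₁ ∪ S₂`, so `|S₁ ∪ S₂| = Δ + 1`, `S₁ ∆ S₂` has two vertices, and every common vertex has all
its neighbours inside `S₁ ∪ S₂`. A vertex of a `Δ`-clique has only one neighbour outside it, so at
most two edges leave `S₁ ∪ S₂`. On the other hand each of the `m = n - Δ - 1 ∈ {Δ - 1, Δ}`
outside vertices has at least `Δ + 1 - m` neighbours in `S₁ ∪ S₂`, and `m (Δ + 1 - m) ≥ 3`
once `Δ ≥ 3`. Pairwise disjoint `Δ`-cliques number at most `n / Δ < 3`.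
-/

open Polynomial Finset

open scoped symmDiff

theorem Set.ncard_mul_le_card_of_pairwiseDisjoint {α : Type*} [Fintype α] [DecidableEq α]
    {𝒮 : Set (Finset α)} {k : ℕ} (hcard : ∀ S ∈ 𝒮, #S = k) (hdisj : 𝒮.PairwiseDisjoint id) :
    𝒮.ncard * k ≤ Fintype.card α := by
  set T := 𝒮.toFinite.toFinset
  have hT : (T : Set (Finset α)) = 𝒮 := Set.Finite.coe_toFinset _
  calc 𝒮.ncard * k = ∑ S ∈ T, #S := by
        rw [Set.ncard_eq_toFinset_card 𝒮, sum_const_nat fun S hS => hcard S (by simpa [T] using hS)]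
    _ = #(T.biUnion id) := (card_biUnion (hT ▸ hdisj)).symm
    _ ≤ Fintype.card α := card_le_univ _

namespace SimpleGraph

variable {V : Type*} [Fintype V] [DecidableEq V] {G : SimpleGraph V} [DecidableRel G.Adj]

theorem IsClique.neighborFinset_inter {S : Finset V} (hS : G.IsClique (S : Set V)) {v : V}
    (hv : v ∈ S) : G.neighborFinset v ∩ S = S.erase v := by
  ext w
  simp only [mem_inter, mem_neighborFinset, mem_erase]
  exact ⟨fun h => ⟨h.1.ne', h.2⟩, fun h => ⟨hS hv h.2 h.1.symm, h.2⟩⟩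

theorem IsClique.card_neighborFinset_sdiff_add_card {S : Finset V} (hS : G.IsClique (S : Set V))
    {v : V} (hv : v ∈ S) : #(G.neighborFinset v \ S) + #S = G.degree v + 1 := by
  have h := card_sdiff_add_card_inter (G.neighborFinset v) S
  rw [hS.neighborFinset_inter hv, card_erase_of_mem hv, card_neighborFinset_eq_degree] at h
  have : 0 < #S := card_pos.mpr ⟨v, hv⟩
  omega

theorem neighborFinset_inter_union_of_mem_inter {S₁ S₂ : Finset V}
    (h₁ : G.IsClique (S₁ : Set V)) (h₂ : G.IsClique (S₂ : Set V)) {v : V} (hv : v ∈ S₁ ∩ S₂) :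
    G.neighborFinset v ∩ (S₁ ∪ S₂) = (S₁ ∪ S₂).erase v := by
  rw [inter_union_distrib_left, h₁.neighborFinset_inter (mem_inter.mp hv).1,
    h₂.neighborFinset_inter (mem_inter.mp hv).2, erase_union_distrib]

theorem card_union_le_degree_add_one_of_mem_inter {S₁ S₂ : Finset V}
    (h₁ : G.IsClique (S₁ : Set V)) (h₂ : G.IsClique (S₂ : Set V)) {v : V} (hv : v ∈ S₁ ∩ S₂) :
    #(S₁ ∪ S₂) ≤ G.degree v + 1 := by
  have h := card_le_card (inter_subset_left (s₁ := G.neighborFinset v) (s₂ := S₁ ∪ S₂))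
  rw [neighborFinset_inter_union_of_mem_inter h₁ h₂ hv,
    card_erase_of_mem (mem_union_left _ (mem_inter.mp hv).1), card_neighborFinset_eq_degree] at h
  omega

theorem neighborFinset_subset_union_of_mem_inter {S₁ S₂ : Finset V}
    (h₁ : G.IsClique (S₁ : Set V)) (h₂ : G.IsClique (S₂ : Set V)) {v : V} (hv : v ∈ S₁ ∩ S₂)
    (hU : #(S₁ ∪ S₂) = G.degree v + 1) : G.neighborFinset v ⊆ S₁ ∪ S₂ := by
  refine inter_eq_left.mp (eq_of_subset_of_card_le inter_subset_left ?_)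
  rw [neighborFinset_inter_union_of_mem_inter h₁ h₂ hv,
    card_erase_of_mem (mem_union_left _ (mem_inter.mp hv).1), hU, card_neighborFinset_eq_degree]
  omega

theorem IsClique.card_filter_adj_add_card_le {S T : Finset V} (hS : G.IsClique (S : Set V))
    {w : V} (hw : w ∈ S) (hT : Disjoint T S) : #{x ∈ T | G.Adj x w} + #S ≤ G.degree w + 1 := by
  have hsub : {x ∈ T | G.Adj x w} ⊆ G.neighborFinset w \ S := fun x hx => by
    rw [mem_filter] at hx
    exact mem_sdiff.mpr ⟨(G.mem_neighborFinset w x).mpr hx.2.symm, Finset.disjoint_left.mp hT hx.1⟩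
  have := hS.card_neighborFinset_sdiff_add_card hw
  have := card_le_card hsub
  omega

variable {Δ : ℕ}

theorem IsRegularOfDegree.card_union_eq_of_mem_inter (hreg : G.IsRegularOfDegree Δ)
    {S₁ S₂ : Finset V} (h₁ : G.IsClique (S₁ : Set V)) (hc₁ : #S₁ = Δ)
    (h₂ : G.IsClique (S₂ : Set V)) (hc₂ : #S₂ = Δ) (hne : S₁ ≠ S₂) {v : V} (hv : v ∈ S₁ ∩ S₂) :
    #(S₁ ∪ S₂) = Δ + 1 := by
  have hle := card_union_le_degree_add_one_of_mem_inter h₁ h₂ hv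
  rw [hreg v] at hle
  have hlt : Δ < #(S₁ ∪ S₂) := by
    by_contra! h
    have e₁ := eq_of_subset_of_card_le subset_union_left (hc₁ ▸ h)
    have e₂ := eq_of_subset_of_card_le subset_union_right (hc₂ ▸ h)
    exact hne (e₁.trans e₂.symm)
  omega

theorem IsRegularOfDegree.card_filter_adj_le_one (hreg : G.IsRegularOfDegree Δ)
    {S T : Finset V} (hS : G.IsClique (S : Set V)) (hc : #S = Δ) {w : V} (hw : w ∈ S)
    (hT : Disjoint T S) : #{x ∈ T | G.Adj x w} ≤ 1 := by
  have := hS.card_filter_adj_add_card_le hw hT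
  rw [hreg w, hc] at this
  omega

theorem IsRegularOfDegree.le_card_compl_add_card_filter_adj
    (hreg : G.IsRegularOfDegree Δ) {S₁ S₂ : Finset V} (h₁ : G.IsClique (S₁ : Set V))
    (h₂ : G.IsClique (S₂ : Set V)) (hU : #(S₁ ∪ S₂) = Δ + 1) {u : V} (hu : u ∈ (S₁ ∪ S₂)ᶜ) :
    Δ + 1 ≤ #(S₁ ∪ S₂)ᶜ + #{w ∈ S₁ ∆ S₂ | G.Adj u w} := by
  have hsub : G.neighborFinset u ⊆ (S₁ ∪ S₂)ᶜ.erase u ∪ {w ∈ S₁ ∆ S₂ | G.Adj u w} := by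
    intro w hw
    rw [mem_neighborFinset] at hw
    by_cases hwU : w ∈ S₁ ∪ S₂
    · refine mem_union_right _ (mem_filter.mpr ⟨?_, hw⟩)
      rw [symmDiff_eq_sup_sdiff_inf]
      refine mem_sdiff.mpr ⟨hwU, fun hwI => mem_compl.mp hu ?_⟩
      exact neighborFinset_subset_union_of_mem_inter h₁ h₂ hwI (by rw [hreg w, hU])
        ((G.mem_neighborFinset w u).mpr hw.symm)
    · exact mem_union_left _ (mem_erase.mpr ⟨hw.ne', mem_compl.mpr hwU⟩)
  have := (card_le_card hsub).trans (card_union_le _ _)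
  rw [card_neighborFinset_eq_degree, hreg u, card_erase_of_mem hu] at this
  have : 0 < #(S₁ ∪ S₂)ᶜ := card_pos.mpr ⟨u, hu⟩
  omega

theorem IsRegularOfDegree.eq_or_disjoint_of_isClique (hreg : G.IsRegularOfDegree Δ)
    (hΔ : 3 ≤ Δ) (h1 : 2 * Δ ≤ Fintype.card V) (h2 : Fintype.card V ≤ 2 * Δ + 1)
    {S₁ S₂ : Finset V} (h₁ : G.IsClique (S₁ : Set V)) (hc₁ : #S₁ = Δ)
    (h₂ : G.IsClique (S₂ : Set V)) (hc₂ : #S₂ = Δ) : S₁ = S₂ ∨ Disjoint S₁ S₂ := by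
  by_contra! ⟨hne, hmeet⟩
  obtain ⟨v, hv⟩ := not_disjoint_iff_nonempty_inter.mp hmeet
  have hU := hreg.card_union_eq_of_mem_inter h₁ hc₁ h₂ hc₂ hne hv
  have hD : #(S₁ ∆ S₂) = 2 := by
    have := card_union_add_card_inter S₁ S₂
    rw [symmDiff_eq_sup_sdiff_inf]
    simp only [sup_eq_union, inf_eq_inter]
    rw [card_sdiff_of_subset inter_subset_union]
    omega
  have hO : #(S₁ ∪ S₂)ᶜ + (Δ + 1) = Fintype.card V := by rw [card_compl, hU]; omega
  -- Double count the edges between `(S₁ ∪ S₂)ᶜ` and `S₁ ∆ S₂`.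
  have hcount : #(S₁ ∪ S₂)ᶜ * (Δ + 1 - #(S₁ ∪ S₂)ᶜ) ≤ 2 * 1 := by
    refine card_nsmul_le_card_nsmul G.Adj (fun u hu => ?_) (fun w hw => ?_) |>.trans_eq
      (by rw [hD, smul_eq_mul])
    · have := hreg.le_card_compl_add_card_filter_adj h₁ h₂ hU hu
      exact Nat.sub_le_of_le_add (by simpa [bipartiteAbove, add_comm] using this)
    · have hT : ∀ {S}, S ⊆ S₁ ∪ S₂ → Disjoint (S₁ ∪ S₂)ᶜ S := fun h =>
        disjoint_compl_left.mono_right h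
      rcases mem_symmDiff.mp hw with ⟨hw₁, -⟩ | ⟨hw₂, -⟩
      · exact hreg.card_filter_adj_le_one h₁ hc₁ hw₁ (hT subset_union_left)
      · exact hreg.card_filter_adj_le_one h₂ hc₂ hw₂ (hT subset_union_right)
  rcases (by omega : Δ + 1 - #(S₁ ∪ S₂)ᶜ = 2 ∧ 2 ≤ #(S₁ ∪ S₂)ᶜ ∨
      Δ + 1 - #(S₁ ∪ S₂)ᶜ = 1 ∧ 3 ≤ #(S₁ ∪ S₂)ᶜ) with ⟨h, _⟩ | ⟨h, _⟩ <;>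
    rw [h] at hcount <;> omega

end SimpleGraph

/-- In a Δ-regular graph with `Δ ≥ 3` and `2Δ ≤ n ≤ 2Δ+1`, any two cliques of
cardinality `Δ` are equal or disjoint; in particular there are at most two such cliques. -/
theorem cliques_of_card_maxDeg_disjoint
    {V : Type*} [Fintype V] [DecidableEq V]
    (G : SimpleGraph V) [DecidableRel G.Adj] (Δ : ℕ)
    (hreg : G.IsRegularOfDegree Δ) (hΔ : 3 ≤ Δ)
    (h1 : 2 * Δ ≤ Fintype.card V) (h2 : Fintype.card V ≤ 2 * Δ + 1) :
    (∀ S₁ S₂ : Finset V, G.IsClique (S₁ : Set V) → S₁.card = Δ →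
      G.IsClique (S₂ : Set V) → S₂.card = Δ → S₁ = S₂ ∨ Disjoint S₁ S₂) ∧
    Set.ncard {S : Finset V | G.IsClique (S : Set V) ∧ S.card = Δ} ≤ 2 := by
  have key : ∀ S₁ S₂ : Finset V, G.IsClique (S₁ : Set V) → S₁.card = Δ →
      G.IsClique (S₂ : Set V) → S₂.card = Δ → S₁ = S₂ ∨ Disjoint S₁ S₂ :=
    fun _ _ h₁ hc₁ h₂ hc₂ => hreg.eq_or_disjoint_of_isClique hΔ h1 h2 h₁ hc₁ h₂ hc₂
  refine ⟨key, ?_⟩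
  have hdisj : {S : Finset V | G.IsClique (S : Set V) ∧ S.card = Δ}.PairwiseDisjoint id :=
    fun S₁ hS₁ S₂ hS₂ hne => (key S₁ S₂ hS₁.1 hS₁.2 hS₂.1 hS₂.2).resolve_left hne
  have := Set.ncard_mul_le_card_of_pairwiseDisjoint (fun _ hS => hS.2) hdisj
  nlinarith
end
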